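/- arXiv:2006.14070 — 5 statements merged into one kernel-verified Lean document; each statement's English description precedes it below -/
import Mathlib

section
/- For every n ≥ 2, the number of standard puzzles of shape 2×n with support {B, D} = {(1,2,4,3), (1,3,4,2)} equals the Catalan number C_n = (1/(n+1))·binomial(2n, n). -/
/-- The rank (1-based) of entry `i` among the four entries of `q`. -/
def puzzleRank {N : ℕ} (q : Fin 4 → Fin N) (i : Fin 4) : ℕ :=
  (Finset.univ.filter (fun k => q k ≤ q i)).card

/-- The pattern (order-isomorphism type) of the `j`-th piece of a 2×n array `f`,
read bottom-left, bottom-right, top-right, top-left. Row `0` is the bottom row. -/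
def piece {n : ℕ} (f : Fin 2 × Fin n → Fin (2 * n)) (j : ℕ) (hj : j + 1 < n) :
    ℕ × ℕ × ℕ × ℕ :=
  let q : Fin 4 → Fin (2 * n) :=
    ![f (0, ⟨j, Nat.lt_of_succ_lt hj⟩), f (0, ⟨j + 1, hj⟩),
      f (1, ⟨j + 1, hj⟩), f (1, ⟨j, Nat.lt_of_succ_lt hj⟩)]
  (puzzleRank q 0, puzzleRank q 1, puzzleRank q 2, puzzleRank q 3)

/-- The number of standard puzzles of shape 2×n all of whose pieces lie in `P`. -/
noncomputable def puzzleCount (n : ℕ) (P : Set (ℕ × ℕ × ℕ × ℕ)) : ℕ :=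
  Nat.card {f : (Fin 2 × Fin n) ≃ Fin (2 * n) //
    ∀ j (hj : j + 1 < n), piece f j hj ∈ P}

/-! A piece has pattern `B` or `D` exactly when its entries increase along both rows and up both
columns, so (as `n ≥ 2`, every column lies in some piece) the puzzles counted are the standard
Young tableaux of shape `2 × n`. Reading `1, …, 2n` and writing `U` for an entry of the bottom row
and `D` for one of the top row is a bijection onto the Dyck words of semilength `n`: the `j`-th
`D` comes after the `j`-th `U` precisely when no prefix has more `D`s than `U`s. -/

open Finset

lemma puzzleRank_eq_of_strictMono_comp {N : ℕ} (q : Fin 4 → Fin N) (σ : Equiv.Perm (Fin 4))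
    (hσ : StrictMono (q ∘ σ)) (i : Fin 4) : puzzleRank q i = σ.symm i + 1 := by
  obtain ⟨i, rfl⟩ := σ.surjective i
  have : univ.filter (fun k => q k ≤ q (σ i)) = (Iic i).map σ.toEmbedding := by
    ext k
    obtain ⟨k, rfl⟩ := σ.surjective k
    simp [← hσ.le_iff_le]
  rw [puzzleRank, this, card_map, Fin.card_Iic, Equiv.symm_apply_apply]

lemma lt_of_puzzleRank_lt {N : ℕ} {q : Fin 4 → Fin N} {i j : Fin 4}
    (h : puzzleRank q i < puzzleRank q j) : q i < q j := by
  contrapose! h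
  exact card_le_card (monotone_filter_right _ fun k _ hk => hk.trans h)

lemma rankPattern_mem_iff {N : ℕ} {q : Fin 4 → Fin N} (hne : q 1 ≠ q 3) :
    (puzzleRank q 0, puzzleRank q 1, puzzleRank q 2, puzzleRank q 3) ∈
        ({(1, 2, 4, 3), (1, 3, 4, 2)} : Set (ℕ × ℕ × ℕ × ℕ)) ↔
      q 0 < q 1 ∧ q 0 < q 3 ∧ q 1 < q 2 ∧ q 3 < q 2 := by
  simp only [Set.mem_insert_iff, Set.mem_singleton_iff, Prod.mk.injEq]
  constructor
  · rintro (⟨h0, h1, h2, h3⟩ | ⟨h0, h1, h2, h3⟩)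
    · have h01 : q 0 < q 1 := lt_of_puzzleRank_lt (by omega)
      have h13 : q 1 < q 3 := lt_of_puzzleRank_lt (by omega)
      have h32 : q 3 < q 2 := lt_of_puzzleRank_lt (by omega)
      exact ⟨h01, h01.trans h13, h13.trans h32, h32⟩
    · have h03 : q 0 < q 3 := lt_of_puzzleRank_lt (by omega)
      have h31 : q 3 < q 1 := lt_of_puzzleRank_lt (by omega)
      have h12 : q 1 < q 2 := lt_of_puzzleRank_lt (by omega)
      exact ⟨h03.trans h31, h03, h12, h31.trans h12⟩
  · rintro ⟨h01, h03, h12, h32⟩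
    -- sorting the entries as `q 0 < q 1 < q 3 < q 2` gives `B`, as `q 0 < q 3 < q 1 < q 2` gives `D`
    rcases hne.lt_or_gt with h13 | h31
    · have h := puzzleRank_eq_of_strictMono_comp q (Equiv.swap 2 3)
        (Fin.strictMono_iff_lt_succ.2 fun i => by
          fin_cases i <;> simp [Equiv.swap_apply_def] <;> assumption)
      left
      simp only [h]
      decide
    · have h := puzzleRank_eq_of_strictMono_comp q (Equiv.swap 1 3 * Equiv.swap 2 3)
        (Fin.strictMono_iff_lt_succ.2 fun i => by
          fin_cases i <;> simp [Equiv.swap_apply_def] <;> assumption)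
      right
      simp only [h]
      decide

variable {n : ℕ}

lemma piece_mem_iff (f : (Fin 2 × Fin n) ≃ Fin (2 * n)) (j : ℕ) (hj : j + 1 < n) :
    piece f j hj ∈ ({(1, 2, 4, 3), (1, 3, 4, 2)} : Set (ℕ × ℕ × ℕ × ℕ)) ↔
      f (0, ⟨j, by omega⟩) < f (0, ⟨j + 1, hj⟩) ∧ f (0, ⟨j, by omega⟩) < f (1, ⟨j, by omega⟩) ∧
        f (0, ⟨j + 1, hj⟩) < f (1, ⟨j + 1, hj⟩) ∧ f (1, ⟨j, by omega⟩) < f (1, ⟨j + 1, hj⟩) :=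
  rankPattern_mem_iff (f.injective.ne (by simp))

def IsStandardTableau (f : (Fin 2 × Fin n) ≃ Fin (2 * n)) : Prop :=
  (∀ r, StrictMono fun j => f (r, j)) ∧ ∀ j, f (0, j) < f (1, j)

lemma forall_piece_mem_iff (hn : 2 ≤ n) (f : (Fin 2 × Fin n) ≃ Fin (2 * n)) :
    (∀ j (hj : j + 1 < n), piece f j hj ∈ ({(1, 2, 4, 3), (1, 3, 4, 2)} : Set (ℕ × ℕ × ℕ × ℕ)))
      ↔ IsStandardTableau f := by
  obtain ⟨m, rfl⟩ : ∃ m, n = m + 2 := ⟨n - 2, by omega⟩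
  simp only [piece_mem_iff, IsStandardTableau, Fin.forall_fin_two, Fin.strictMono_iff_lt_succ]
  constructor
  · intro h
    have h' (i : Fin (m + 1)) := h i (Nat.succ_lt_succ i.2)
    exact ⟨⟨fun i => (h' i).1, fun i => (h' i).2.2.2⟩,
      Fin.lastCases (h' (Fin.last m)).2.2.1 fun i => (h' i).2.1⟩
  · rintro ⟨⟨h0, h1⟩, hcol⟩ j hj
    exact ⟨h0 ⟨j, Nat.lt_of_succ_lt_succ hj⟩, hcol _, hcol _, h1 ⟨j, Nat.lt_of_succ_lt_succ hj⟩⟩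

lemma count_take_ofFn {α : Type*} [DecidableEq α] {N : ℕ} (w : Fin N → α) (a : α) (i : ℕ) :
    ((List.ofFn w).take i).count a = #{k : Fin N | (k : ℕ) < i ∧ w k = a} := by
  induction N generalizing i with
  | zero => simp
  | succ N ih =>
    cases i with
    | zero => simp
    | succ i =>
      rw [List.ofFn_succ, List.take_succ_cons, List.count_cons, ih, Fin.card_filter_univ_succ']
      simp only [Fin.val_zero, Fin.val_succ, Nat.zero_lt_succ, Nat.succ_lt_succ_iff, true_and,
        beq_iff_eq, add_comm]

lemma count_ofFn {α : Type*} [DecidableEq α] {N : ℕ} (w : Fin N → α) (a : α) :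
    (List.ofFn w).count a = #{k | w k = a} := by
  simpa [List.take_of_length_le] using count_take_ofFn w a N

lemma StrictMono.lt_card_filter_lt_iff {β : Type*} [LinearOrder β] {m : ℕ} {e : Fin m → β}
    (he : StrictMono e) (j : Fin m) (b : β) : (j : ℕ) < #{i | e i < b} ↔ e j < b := by
  constructor
  · contrapose!
    intro hb
    calc #{i | e i < b} ≤ #(Iio j) :=
          card_le_card fun i hi => by simpa [← he.lt_iff_lt] using (mem_filter.1 hi).2.trans_le hb
      _ = j := Fin.card_Iio j
  · intro hb
    calc (j : ℕ) < #(Iic j) := by simp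
      _ ≤ #{i | e i < b} :=
          card_le_card fun i hi => by simpa using (he.monotone (mem_Iic.1 hi)).trans_lt hb

lemma lt_of_forall_card_filter_le {m : ℕ} {e₀ e₁ : Fin m → ℕ} (h₀ : StrictMono e₀)
    (h₁ : StrictMono e₁) {j : Fin m} (hne : e₀ j ≠ e₁ j)
    (h : ∀ b, #{i | e₁ i < b} ≤ #{i | e₀ i < b}) : e₀ j < e₁ j := by
  have : e₀ j < e₁ j + 1 :=
    (h₀.lt_card_filter_lt_iff j _).1 <|
      ((h₁.lt_card_filter_lt_iff j _).2 (Nat.lt_succ_self _)).trans_le (h _)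
  omega

open DyckStep

def stepOfRow : Fin 2 → DyckStep := ![U, D]

lemma stepOfRow_injective : Function.Injective stepOfRow := by decide

def tableauWord (f : (Fin 2 × Fin n) ≃ Fin (2 * n)) : List DyckStep :=
  List.ofFn fun k => stepOfRow (f.symm k).1

lemma card_filter_symm_fst_eq (f : (Fin 2 × Fin n) ≃ Fin (2 * n)) (r : Fin 2) (i : ℕ) :
    #{k : Fin (2 * n) | (k : ℕ) < i ∧ (f.symm k).1 = r} = #{j | (f (r, j) : ℕ) < i} := by
  symm
  refine card_bij (fun j _ => f (r, j)) (fun j hj => by simpa using hj)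
    (fun j _ j' _ h => by simpa using f.injective h) fun k hk => ?_
  obtain ⟨hki, rfl⟩ := (mem_filter.1 hk).2
  exact ⟨(f.symm k).2, by simpa using hki, by simp⟩

lemma count_take_tableauWord (f : (Fin 2 × Fin n) ≃ Fin (2 * n)) (r : Fin 2) (i : ℕ) :
    ((tableauWord f).take i).count (stepOfRow r) = #{j | (f (r, j) : ℕ) < i} := by
  simp only [tableauWord, count_take_ofFn, stepOfRow_injective.eq_iff, card_filter_symm_fst_eq]

lemma count_tableauWord (f : (Fin 2 × Fin n) ≃ Fin (2 * n)) (r : Fin 2) :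
    (tableauWord f).count (stepOfRow r) = n := by
  simpa [tableauWord, List.take_of_length_le] using count_take_tableauWord f r (2 * n)

lemma IsStandardTableau.count_take_D_le_count_take_U {f : (Fin 2 × Fin n) ≃ Fin (2 * n)}
    (hf : IsStandardTableau f) (i : ℕ) :
    ((tableauWord f).take i).count D ≤ ((tableauWord f).take i).count U := by
  refine (count_take_tableauWord f 1 i).trans_le ?_ |>.trans (count_take_tableauWord f 0 i).ge
  exact card_le_card (monotone_filter_right _ fun j _ hj => (Fin.lt_def.1 (hf.2 j)).trans hj)

def IsStandardTableau.dyckWord {f : (Fin 2 × Fin n) ≃ Fin (2 * n)} (hf : IsStandardTableau f) :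
    DyckWord where
  toList := tableauWord f
  count_U_eq_count_D := (count_tableauWord f 0).trans (count_tableauWord f 1).symm
  count_D_le_count_U := hf.count_take_D_le_count_take_U

lemma mem_range_iff_symm_fst_eq (f : (Fin 2 × Fin n) ≃ Fin (2 * n)) (r : Fin 2) (k : Fin (2 * n)) :
    k ∈ Set.range (fun j => f (r, j)) ↔ (f.symm k).1 = r := by
  constructor
  · rintro ⟨j, rfl⟩
    simp
  · rintro rfl
    exact ⟨(f.symm k).2, by simp⟩

lemma IsStandardTableau.eq_of_tableauWord_eq {f g : (Fin 2 × Fin n) ≃ Fin (2 * n)}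
    (hf : IsStandardTableau f) (hg : IsStandardTableau g) (h : tableauWord f = tableauWord g) :
    f = g := by
  have hrow (k : Fin (2 * n)) : (f.symm k).1 = (g.symm k).1 :=
    stepOfRow_injective (congrFun (List.ofFn_injective h) k)
  have hrows (r : Fin 2) : (fun j => f (r, j)) = fun j => g (r, j) :=
    ((hf.1 r).range_inj (hg.1 r)).1 <| Set.ext fun k => by
      rw [mem_range_iff_symm_fst_eq, mem_range_iff_symm_fst_eq, hrow]
  exact Equiv.ext fun x => congrFun (hrows x.1) x.2

section OfWord

variable {N : ℕ} (w : Fin N → DyckStep) (hw : ∀ r, #{k | w k = stepOfRow r} = n)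

noncomputable def entryOfWord (x : Fin 2 × Fin n) : Fin N :=
  (univ.filter fun k => w k = stepOfRow x.1).orderEmbOfFin (hw x.1) x.2

lemma apply_entryOfWord (x : Fin 2 × Fin n) : w (entryOfWord w hw x) = stepOfRow x.1 :=
  (mem_filter.1 (orderEmbOfFin_mem _ (hw x.1) x.2)).2

lemma entryOfWord_injective : Function.Injective (entryOfWord w hw) := by
  rintro ⟨r, j⟩ ⟨r', j'⟩ h
  obtain rfl : r = r' := stepOfRow_injective <| by
    rw [← apply_entryOfWord w hw (r, j), ← apply_entryOfWord w hw (r', j'), h]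
  exact Prod.ext rfl ((orderEmbOfFin _ (hw r)).injective h)

end OfWord

section TableauOfWord

variable (w : Fin (2 * n) → DyckStep) (hw : ∀ r, #{k | w k = stepOfRow r} = n)

noncomputable def tableauOfWord : (Fin 2 × Fin n) ≃ Fin (2 * n) :=
  Equiv.ofBijective (entryOfWord w hw) <|
    (Fintype.bijective_iff_injective_and_card _).2 ⟨entryOfWord_injective w hw, by simp⟩

lemma tableauWord_tableauOfWord : tableauWord (tableauOfWord w hw) = List.ofFn w := by
  refine congrArg List.ofFn (funext fun k => ?_)
  conv_rhs => rw [← (tableauOfWord w hw).apply_symm_apply k]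
  exact (apply_entryOfWord w hw _).symm

lemma isStandardTableau_tableauOfWord
    (hdyck : ∀ i, ((List.ofFn w).take i).count D ≤ ((List.ofFn w).take i).count U) :
    IsStandardTableau (tableauOfWord w hw) := by
  have hrow (r : Fin 2) : StrictMono fun j => tableauOfWord w hw (r, j) :=
    (orderEmbOfFin _ (hw r)).strictMono
  refine ⟨hrow, fun j => Fin.lt_def.2 <| lt_of_forall_card_filter_le
    (Fin.val_strictMono.comp (hrow 0)) (Fin.val_strictMono.comp (hrow 1))
    (Fin.val_injective.ne ((tableauOfWord w hw).injective.ne (by simp))) fun i => ?_⟩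
  simp only [Function.comp_apply]
  rw [← count_take_tableauWord, ← count_take_tableauWord, tableauWord_tableauOfWord]
  exact hdyck i

end TableauOfWord

lemma exists_ofFn_eq {α : Type*} (l : List α) {N : ℕ} (h : l.length = N) :
    ∃ w : Fin N → α, List.ofFn w = l := by
  subst h
  exact ⟨_, List.ofFn_getElem⟩

def standardTableauToDyckWord (n : ℕ) :
    {f : (Fin 2 × Fin n) ≃ Fin (2 * n) // IsStandardTableau f} →
      {p : DyckWord // p.semilength = n} :=
  fun f => ⟨f.2.dyckWord, count_tableauWord f.1 0⟩

lemma standardTableauToDyckWord_bijective (n : ℕ) :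
    Function.Bijective (standardTableauToDyckWord n) := by
  refine ⟨fun f g h => Subtype.ext (f.2.eq_of_tableauWord_eq g.2 ?_), fun ⟨p, hp⟩ => ?_⟩
  · exact congrArg (fun p : {p : DyckWord // p.semilength = n} => p.1.toList) h
  obtain ⟨w, hwp⟩ := exists_ofFn_eq p.toList (by rw [← p.two_mul_semilength_eq_length, hp])
  have hw : ∀ r, #{k | w k = stepOfRow r} = n := by
    simp only [Fin.forall_fin_two, ← count_ofFn, hwp]
    exact ⟨hp, p.semilength_eq_count_D.symm.trans hp⟩
  refine ⟨⟨tableauOfWord w hw, isStandardTableau_tableauOfWord w hw (hwp ▸ p.count_D_le_count_U)⟩,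
    Subtype.ext (DyckWord.ext ((tableauWord_tableauOfWord w hw).trans hwp))⟩

theorem stmt0 (n : ℕ) (hn : 2 ≤ n) :
    puzzleCount n {(1, 2, 4, 3), (1, 3, 4, 2)} = catalan n := by
  rw [puzzleCount, Nat.card_congr (Equiv.subtypeEquivRight (forall_piece_mem_iff hn)),
    Nat.card_eq_of_bijective _ (standardTableauToDyckWord_bijective n), Nat.card_eq_fintype_card,
    DyckWord.card_dyckWord_semilength_eq_catalan]
end

section
/- For every n ≥ 2, the number of standard puzzles of shape 2×n with support {A, C} = {(1,2,3,4), (1,3,2,4)} equals 2. -/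
/-!
A piece has pattern `A` or `C` exactly when its bottom-left entry is the smallest and its
top-left entry the largest of the four. Chaining these inequalities, the bottom row increases,
the top row decreases, and every bottom entry lies below every top entry, except that the two
entries of the last column are not compared. So along the snake order (bottom row left to
right, then top row right to left) a puzzle is increasing except possibly at the two middle
positions, and the only permutations of `Fin (2 * n)` with this property are the identity and
the transposition of those two positions.
-/

open Function Equiv

section Rank

variable {N : ℕ} {q : Fin 4 → Fin N}

lemma one_le_puzzleRank (i : Fin 4) : 1 ≤ puzzleRank q i :=
  Finset.card_pos.2 ⟨i, by simp⟩

lemma puzzleRank_le_four (i : Fin 4) : puzzleRank q i ≤ 4 :=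
  (Finset.card_filter_le _ _).trans_eq (by simp)

lemma puzzleRank_mono {i k : Fin 4} (h : q i ≤ q k) : puzzleRank q i ≤ puzzleRank q k :=
  Finset.card_le_card fun x hx => by
    simp only [Finset.mem_filter, Finset.mem_univ, true_and] at hx ⊢
    exact hx.trans h

lemma puzzleRank_lt_puzzleRank_iff {i k : Fin 4} :
    puzzleRank q i < puzzleRank q k ↔ q i < q k := by
  refine ⟨fun h => lt_of_not_ge fun hki => h.not_ge (puzzleRank_mono hki), fun h => ?_⟩
  refine Finset.card_lt_card <|
    (Finset.ssubset_iff_of_subset fun x hx => ?_).2 ⟨k, by simp, by simp [h]⟩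
  simp only [Finset.mem_filter, Finset.mem_univ, true_and] at hx ⊢
  exact hx.trans h.le

lemma puzzleRank_injective (hq : Injective q) : Injective (puzzleRank q) := by
  intro i k h
  by_contra hik
  rcases lt_or_gt_of_ne (hq.ne hik) with hlt | hlt
  · exact (puzzleRank_lt_puzzleRank_iff.2 hlt).ne h
  · exact (puzzleRank_lt_puzzleRank_iff.2 hlt).ne' h

/-- The ranks of an injective quadruple form a permutation of `1, …, 4`, and `A`, `C` are
exactly those permutations starting with `1` and ending with `4`. -/
lemma puzzleRank_mem_AC_iff (hq : Injective q) :
    (puzzleRank q 0, puzzleRank q 1, puzzleRank q 2, puzzleRank q 3) ∈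
        ({(1, 2, 3, 4), (1, 3, 2, 4)} : Set (ℕ × ℕ × ℕ × ℕ)) ↔
      q 0 < q 1 ∧ q 0 < q 2 ∧ q 1 < q 3 ∧ q 2 < q 3 := by
  simp only [← puzzleRank_lt_puzzleRank_iff, Set.mem_insert_iff, Set.mem_singleton_iff,
    Prod.mk.injEq]
  have hr := puzzleRank_injective hq
  have hb (i : Fin 4) := And.intro (one_le_puzzleRank (q := q) i) (puzzleRank_le_four (q := q) i)
  have := hb 0; have := hb 1; have := hb 2; have := hb 3
  have : puzzleRank q 0 ≠ puzzleRank q 1 := hr.ne (by decide)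
  have : puzzleRank q 0 ≠ puzzleRank q 2 := hr.ne (by decide)
  have : puzzleRank q 0 ≠ puzzleRank q 3 := hr.ne (by decide)
  have : puzzleRank q 1 ≠ puzzleRank q 2 := hr.ne (by decide)
  have : puzzleRank q 1 ≠ puzzleRank q 3 := hr.ne (by decide)
  have : puzzleRank q 2 ≠ puzzleRank q 3 := hr.ne (by decide)
  omega

end Rank

lemma piece_mem_AC_iff {n : ℕ} (f : Fin 2 × Fin n ≃ Fin (2 * n)) (j : ℕ) (hj : j + 1 < n) :
    piece f j hj ∈ ({(1, 2, 3, 4), (1, 3, 2, 4)} : Set (ℕ × ℕ × ℕ × ℕ)) ↔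
      f (0, ⟨j, by omega⟩) < f (0, ⟨j + 1, hj⟩) ∧ f (0, ⟨j, by omega⟩) < f (1, ⟨j + 1, hj⟩) ∧
        f (0, ⟨j + 1, hj⟩) < f (1, ⟨j, by omega⟩) ∧ f (1, ⟨j + 1, hj⟩) < f (1, ⟨j, by omega⟩) :=
  puzzleRank_mem_AC_iff fun x y hxy => by
    fin_cases x <;> fin_cases y <;> simp_all [Prod.ext_iff, Fin.ext_iff]

/-- In every piece the bottom-left entry is the smallest and the top-left entry the largest. -/
def CornerOrdered {m : ℕ} {β : Type*} [LT β] (f : Fin 2 × Fin (m + 1) → β) : Prop :=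
  ∀ i : Fin m, f (0, i.castSucc) < f (0, i.succ) ∧ f (0, i.castSucc) < f (1, i.succ) ∧
    f (0, i.succ) < f (1, i.castSucc) ∧ f (1, i.succ) < f (1, i.castSucc)

lemma forall_piece_mem_AC_iff {m : ℕ} (f : Fin 2 × Fin (m + 1) ≃ Fin (2 * (m + 1))) :
    (∀ j (hj : j + 1 < m + 1),
        piece f j hj ∈ ({(1, 2, 3, 4), (1, 3, 2, 4)} : Set (ℕ × ℕ × ℕ × ℕ))) ↔
      CornerOrdered f := by
  simp only [piece_mem_AC_iff]
  exact ⟨fun h i => h i (by omega), fun h j hj => h ⟨j, by omega⟩⟩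

def StrictMonoExcept {α β : Type*} [Preorder α] [Preorder β] (f : α → β) (u v : α) : Prop :=
  ∀ ⦃i k⦄, i < k → (i, k) ≠ (u, v) → f i < f k

section Perm

variable {α : Type*} [LinearOrder α] {u v : α}

lemma Equiv.Perm.eq_one_of_strictMono [Finite α] {σ : Perm α} (hσ : StrictMono σ) : σ = 1 :=
  Equiv.ext fun _ => hσ.apply_eq

lemma strictMonoExcept_swap (huv : u ⋖ v) : StrictMonoExcept (swap u v) u v := by
  intro i k hik hne
  have := huv.lt
  have := huv.ge_of_gt (c := k)
  have := huv.le_of_lt (c := i)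
  rw [swap_apply_def, swap_apply_def]
  split_ifs <;> simp_all <;> order

lemma StrictMonoExcept.eq_one_or_eq_swap [Finite α] (huv : u ⋖ v) {σ : Perm α}
    (hσ : StrictMonoExcept σ u v) : σ = 1 ∨ σ = swap u v := by
  rcases lt_or_gt_of_ne (σ.injective.ne huv.ne) with h | h
  · refine Or.inl <| Perm.eq_one_of_strictMono fun i k hik => ?_
    by_cases hik' : (i, k) = (u, v)
    · simp_all
    · exact hσ hik hik'
  · refine Or.inr ?_
    suffices σ * swap u v = 1 by simpa using mul_eq_one_iff_eq_inv.1 this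
    refine Perm.eq_one_of_strictMono fun i k hik => ?_
    by_cases hik' : (i, k) = (u, v)
    · simp_all
    · refine hσ (strictMonoExcept_swap huv hik hik') fun he => ?_
      simp only [Prod.mk.injEq, swap_apply_eq_iff, swap_apply_left, swap_apply_right] at he
      obtain ⟨rfl, rfl⟩ := he
      exact hik.not_gt huv.lt

theorem strictMonoExcept_iff_eq_one_or_eq_swap [Finite α] (huv : u ⋖ v) {σ : Perm α} :
    StrictMonoExcept σ u v ↔ σ = 1 ∨ σ = swap u v := by
  refine ⟨StrictMonoExcept.eq_one_or_eq_swap huv, ?_⟩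
  rintro (rfl | rfl)
  · exact fun i k hik _ => hik
  · exact strictMonoExcept_swap huv

end Perm

def snake (n : ℕ) : Fin 2 × Fin n ≃ Fin (2 * n) :=
  (prodShear (Equiv.refl _) fun i => if i = 0 then Equiv.refl _ else Fin.revPerm).trans
    finProdFinEquiv

@[simp]
lemma snake_zero {n : ℕ} (j : Fin n) : (snake n (0, j) : ℕ) = j := by
  simp [snake, finProdFinEquiv]

@[simp]
lemma snake_one {n : ℕ} (j : Fin n) : (snake n (1, j) : ℕ) = 2 * n - 1 - j := by
  simp only [snake, finProdFinEquiv, trans_apply, prodShear_apply, refl_apply, one_ne_zero,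
    ↓reduceIte, Fin.revPerm_apply, coe_fn_mk, Fin.val_rev, Fin.isValue, Fin.val_one, mul_one]
  omega

lemma snake_covBy (m : ℕ) : snake (m + 1) (0, Fin.last m) ⋖ snake (m + 1) (1, Fin.last m) := by
  simp only [Fin.covBy_iff, Nat.covBy_iff_add_one_eq, snake_zero, snake_one, Fin.val_last]
  omega

namespace CornerOrdered

variable {m : ℕ} {β : Type*} [Preorder β] {f : Fin 2 × Fin (m + 1) → β}

lemma strictMono_bottom (hf : CornerOrdered f) : StrictMono fun k => f (0, k) :=
  Fin.strictMono_iff_lt_succ.2 fun i => (hf i).1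

lemma strictAnti_top (hf : CornerOrdered f) : StrictAnti fun k => f (1, k) :=
  Fin.strictAnti_iff_succ_lt.2 fun i => (hf i).2.2.2

lemma bottom_lt_top (hf : CornerOrdered f) {j k : Fin (m + 1)}
    (hjk : ¬(j = Fin.last m ∧ k = Fin.last m)) : f (0, j) < f (1, k) := by
  rcases lt_or_ge j k with hlt | hle
  · obtain ⟨i, rfl⟩ := Fin.exists_succ_eq.2 (j.zero_le.trans_lt hlt).ne'
    exact (hf.strictMono_bottom.monotone (Fin.le_castSucc_iff.2 hlt)).trans_lt (hf i).2.1
  by_cases hj : j = Fin.last m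
  · subst hj
    obtain ⟨i, rfl⟩ := Fin.exists_castSucc_eq.2 (by simpa using hjk)
    cases m with
    | zero => exact i.elim0
    | succ m =>
      calc f (0, Fin.last (m + 1)) = f (0, (Fin.last m).succ) := by rw [Fin.succ_last]
        _ < f (1, (Fin.last m).castSucc) := (hf _).2.2.1
        _ ≤ f (1, i.castSucc) :=
          hf.strictAnti_top.antitone (Fin.castSucc_le_castSucc_iff.2 (Fin.le_last i))
  · obtain ⟨i, rfl⟩ := Fin.exists_castSucc_eq.2 hj
    exact (hf i).2.1.trans (hf.strictAnti_top (hle.trans_lt Fin.castSucc_lt_succ))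

lemma lt_of_snake_lt (hf : CornerOrdered f) {p q : Fin 2 × Fin (m + 1)}
    (hpq : snake _ p < snake _ q) (hne : (p, q) ≠ ((0, Fin.last m), (1, Fin.last m))) :
    f p < f q := by
  obtain ⟨i, j⟩ := p
  obtain ⟨i', k⟩ := q
  rw [Fin.lt_def] at hpq
  fin_cases i <;> fin_cases i' <;>
    simp only [Fin.zero_eta, Fin.mk_one, Fin.isValue, snake_zero, snake_one, Fin.val_fin_lt,
      ne_eq, Prod.mk.injEq, true_and, not_and] at hpq hne
  · exact hf.strictMono_bottom hpq
  · exact hf.bottom_lt_top (not_and.2 hne)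
  · omega
  · exact hf.strictAnti_top (by omega)

end CornerOrdered

lemma cornerOrdered_iff_strictMonoExcept {m : ℕ} {β : Type*} [Preorder β]
    (f : Fin 2 × Fin (m + 1) → β) :
    CornerOrdered f ↔ StrictMonoExcept (f ∘ (snake (m + 1)).symm)
      (snake _ (0, Fin.last m)) (snake _ (1, Fin.last m)) := by
  constructor
  · intro hf i k hik hne
    refine hf.lt_of_snake_lt (by simpa using hik) ?_
    simpa only [ne_eq, Prod.mk.injEq, Equiv.symm_apply_eq] using hne
  · intro h i
    have h' : ∀ p q, snake _ p < snake _ q → (p, q) ≠ ((0, Fin.last m), (1, Fin.last m)) →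
        f p < f q := fun p q hpq hne => by
      simpa using
        h hpq (by simpa only [ne_eq, Prod.mk.injEq, EmbeddingLike.apply_eq_iff_eq] using hne)
    refine ⟨h' _ _ ?_ ?_, h' _ _ ?_ ?_, h' _ _ ?_ ?_, h' _ _ ?_ ?_⟩ <;>
      simp only [Fin.isValue, Fin.lt_def, snake_zero, snake_one, Fin.val_castSucc, Fin.val_succ,
        ne_eq, Prod.mk.injEq, Fin.castSucc_ne_last, zero_ne_one, one_ne_zero, true_and, false_and,
        and_false, not_false_eq_true] <;>
      omega

theorem stmt4 (n : ℕ) (hn : 2 ≤ n) :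
    puzzleCount n {(1, 2, 3, 4), (1, 3, 2, 4)} = 2 := by
  obtain ⟨m, rfl⟩ : ∃ m, n = m + 1 := ⟨n - 1, by omega⟩
  have huv := snake_covBy m
  let e := (snake (m + 1)).equivCongr (Equiv.refl (Fin (2 * (m + 1))))
  have key : ∀ f : Fin 2 × Fin (m + 1) ≃ Fin (2 * (m + 1)),
      (∀ j hj, piece f j hj ∈ ({(1, 2, 3, 4), (1, 3, 2, 4)} : Set _)) ↔
        e f ∈ ({1, swap (snake _ (0, Fin.last m)) (snake _ (1, Fin.last m))} : Set _) := by
    intro f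
    rw [forall_piece_mem_AC_iff, cornerOrdered_iff_strictMonoExcept]
    exact strictMonoExcept_iff_eq_one_or_eq_swap (σ := e f) huv
  rw [puzzleCount, Nat.card_congr (e.subtypeEquiv key), Nat.card_coe_set_eq,
    Set.ncard_pair (Ne.symm (swap_eq_one_iff.not.2 huv.ne))]
end

section
/- For every n ≥ 2, the number of standard puzzles of shape 2×n with support {A, B} = {(1,2,3,4), (1,2,4,3)} equals 2^{n-1}·(n−1)! (the double factorial (2(n−1))!!). -/
/-!
Write `b j`, `t j` for the bottom and top entries of column `j`, with values `0, …, 2n - 1`.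
Support `{A, B}` says exactly that the bottom row increases and that `b (j+1) < t j` and
`b (j+1) < t (j+1)`. Then `b 0 = 0` and, when `n ≥ 2`, `b 1 = 1`, so `T = t 0 ≥ 2`. Deleting the
first column and standardising the remaining values gives such a puzzle with `n - 1` columns, and
conversely every `T ∈ {2, …, 2n - 1}` can be put back in front of every smaller puzzle. So the
count is multiplied by `2(n - 1)` in passing from `n - 1` to `n` columns, starting from the single
one-column puzzle `b 0 < t 0`.
-/

namespace TwoRowPuzzle

open Function

variable {N : ℕ}

abbrev supportAB : Set (ℕ × ℕ × ℕ × ℕ) := {(1, 2, 3, 4), (1, 2, 4, 3)}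

section Ranks

variable (q : Fin 4 → Fin N)

lemma puzzleRank_le_puzzleRank {i j : Fin 4} (h : q i ≤ q j) :
    puzzleRank q i ≤ puzzleRank q j :=
  Finset.card_le_card <| Finset.monotone_filter_right _ fun _ _ hk => hk.trans h

lemma lt_of_puzzleRank_lt {i j : Fin 4} (h : puzzleRank q i < puzzleRank q j) : q i < q j :=
  lt_of_not_ge fun h' => (puzzleRank_le_puzzleRank q h').not_gt h

lemma puzzleRanks_mem_supportAB_iff (h23 : q 2 ≠ q 3) :
    (puzzleRank q 0, puzzleRank q 1, puzzleRank q 2, puzzleRank q 3) ∈ supportAB ↔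
      q 0 < q 1 ∧ q 1 < q 2 ∧ q 1 < q 3 := by
  simp only [Set.mem_insert_iff, Set.mem_singleton_iff, Prod.mk.injEq]
  constructor
  · rintro (⟨h0, h1, h2, h3⟩ | ⟨h0, h1, h2, h3⟩) <;>
      exact ⟨lt_of_puzzleRank_lt q (by omega), lt_of_puzzleRank_lt q (by omega),
        lt_of_puzzleRank_lt q (by omega)⟩
  · rintro ⟨h01, h12, h13⟩
    have h02 := h01.trans h12
    have h03 := h01.trans h13
    simp only [puzzleRank, Finset.card_filter, Fin.sum_univ_four]
    rcases h23.lt_or_gt with h23 | h32 <;> simp [*, le_of_lt, not_le_of_gt]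

end Ranks

lemma piece_mem_supportAB_iff {n : ℕ} {f : Fin 2 × Fin n → Fin (2 * n)} (hf : Injective f)
    (j : ℕ) (hj : j + 1 < n) :
    piece f j hj ∈ supportAB ↔
      f (0, ⟨j, j.lt_of_succ_lt hj⟩) < f (0, ⟨j + 1, hj⟩) ∧
        f (0, ⟨j + 1, hj⟩) < f (1, ⟨j + 1, hj⟩) ∧
        f (0, ⟨j + 1, hj⟩) < f (1, ⟨j, j.lt_of_succ_lt hj⟩) :=
  puzzleRanks_mem_supportAB_iff _ (hf.ne (by simp))

/-- The column condition at `j = 0` follows from the pieces once there are two columns; it is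
imposed so that the one-column case is the base of the recursion. -/
def Admissible {k : ℕ} (f : Fin 2 × Fin (k + 1) → Fin N) : Prop :=
  (∀ j, f (0, j) < f (1, j)) ∧
    ∀ j : Fin k, f (0, j.castSucc) < f (0, j.succ) ∧ f (0, j.succ) < f (1, j.castSucc)

lemma forall_piece_mem_iff_admissible {m : ℕ} (hm : 1 ≤ m)
    {f : Fin 2 × Fin (m + 1) → Fin (2 * (m + 1))} (hf : Injective f) :
    (∀ j (hj : j + 1 < m + 1), piece f j hj ∈ supportAB) ↔ Admissible f := by
  simp only [piece_mem_supportAB_iff hf]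
  constructor
  · intro h
    have hpiece (j : Fin m) := h j (Nat.succ_lt_succ j.2)
    refine ⟨fun j => ?_, fun j => ⟨(hpiece j).1, (hpiece j).2.2⟩⟩
    cases j using Fin.cases with
    | zero => exact (h 0 (by omega)).1.trans (h 0 (by omega)).2.2
    | succ j => exact (hpiece j).2.1
  · intro h j hj
    exact ⟨(h.2 ⟨j, by omega⟩).1, h.1 ⟨j + 1, hj⟩, (h.2 ⟨j, by omega⟩).2⟩

section Admissible

variable {k : ℕ}

lemma Admissible.apply_zero_le {f : Fin 2 × Fin (k + 1) → Fin N} (hf : Admissible f)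
    (p : Fin 2 × Fin (k + 1)) : f (0, 0) ≤ f p := by
  have hmono : StrictMono fun j => f (0, j) := Fin.strictMono_iff_lt_succ.mpr fun j => (hf.2 j).1
  obtain ⟨i, j⟩ := p
  have h0j : f (0, 0) ≤ f (0, j) := hmono.monotone (Fin.zero_le j)
  fin_cases i
  · exact h0j
  · exact h0j.trans (hf.1 j).le

lemma Admissible.apply_zero_zero [NeZero N] {f : Fin 2 × Fin (k + 1) ≃ Fin N}
    (hf : Admissible f) : f (0, 0) = 0 :=
  le_antisymm ((hf.apply_zero_le (f.symm 0)).trans_eq (f.apply_symm_apply 0)) (Fin.zero_le _)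

end Admissible

section SkipTwo

variable (c : Fin N)

def skipTwo (y : Fin N) : Fin (N + 2) := (c.succ.succAbove y).succ

lemma strictMono_skipTwo : StrictMono (skipTwo c) :=
  Fin.strictMono_succ.comp (Fin.strictMono_succAbove _)

@[simp]
lemma skipTwo_lt_skipTwo_iff {y y' : Fin N} : skipTwo c y < skipTwo c y' ↔ y < y' :=
  (strictMono_skipTwo c).lt_iff_lt

lemma skipTwo_ne_zero (y : Fin N) : skipTwo c y ≠ 0 := Fin.succ_ne_zero _

lemma skipTwo_ne (y : Fin N) : skipTwo c y ≠ c.succ.succ :=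
  fun h => Fin.succAbove_ne _ _ (Fin.succ_injective _ h)

lemma exists_skipTwo_eq {x : Fin (N + 2)} (h0 : x ≠ 0) (hc : x ≠ c.succ.succ) :
    ∃ y, skipTwo c y = x := by
  obtain ⟨x, rfl⟩ := Fin.exists_succ_eq.mpr h0
  obtain ⟨y, rfl⟩ := Fin.exists_succAbove_eq fun h => hc (congrArg Fin.succ h)
  exact ⟨y, rfl⟩

lemma skipTwo_lt {y : Fin N} (h : y ≤ c) : skipTwo c y < c.succ.succ := by
  rw [skipTwo, Fin.succ_lt_succ_iff,
    Fin.succAbove_of_castSucc_lt _ _ (Fin.castSucc_lt_succ_iff.mpr h)]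
  exact Fin.castSucc_lt_succ_iff.mpr h

end SkipTwo

section ConsColumn

variable {k : ℕ} (c : Fin N)

def consColumn (g : Fin 2 × Fin k → Fin N) (p : Fin 2 × Fin (k + 1)) : Fin (N + 2) :=
  Fin.cases (![0, c.succ.succ] p.1) (fun j => skipTwo c (g (p.1, j))) p.2

variable {c}

@[simp]
lemma consColumn_zero (g : Fin 2 × Fin k → Fin N) (i : Fin 2) :
    consColumn c g (i, 0) = ![0, c.succ.succ] i := rfl

@[simp]
lemma consColumn_succ (g : Fin 2 × Fin k → Fin N) (i : Fin 2) (j : Fin k) :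
    consColumn c g (i, j.succ) = skipTwo c (g (i, j)) := rfl

lemma consColumn_injective {g : Fin 2 × Fin k → Fin N} (hg : Injective g) :
    Injective (consColumn c g) := by
  have hsep : ∀ i y, ![0, c.succ.succ] i ≠ skipTwo c y := by
    intro i y
    fin_cases i
    exacts [(skipTwo_ne_zero c y).symm, (skipTwo_ne c y).symm]
  rintro ⟨i, j⟩ ⟨i', j'⟩ h
  cases j using Fin.cases <;> cases j' using Fin.cases
  · fin_cases i <;> fin_cases i' <;> simp_all [(Fin.succ_ne_zero c.succ).symm]
  · exact absurd h (hsep _ _)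
  · exact absurd h.symm (hsep _ _)
  · simpa using hg ((strictMono_skipTwo c).injective h)

lemma Admissible.of_consColumn {g : Fin 2 × Fin (k + 1) → Fin N}
    (h : Admissible (consColumn c g)) : Admissible g := by
  refine ⟨fun j => by simpa using h.1 j.succ, fun j => ?_⟩
  simpa [Fin.castSucc_succ] using h.2 j.succ

lemma Admissible.consColumn {g : Fin 2 × Fin (k + 1) → Fin N} (hg : Admissible g)
    (hc : g (0, 0) ≤ c) : Admissible (consColumn c g) := by
  refine ⟨fun j => ?_, fun j => ?_⟩
  · cases j using Fin.cases
    · simp [Fin.pos_iff_ne_zero]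
    · simpa using hg.1 _
  · cases j using Fin.cases
    · simp only [Fin.castSucc_zero, consColumn_zero, consColumn_succ, Matrix.cons_val_zero,
        Matrix.cons_val_one]
      exact ⟨Fin.pos_iff_ne_zero.mpr (skipTwo_ne_zero c _), skipTwo_lt c hc⟩
    · simpa [Fin.castSucc_succ] using hg.2 _

end ConsColumn

/-- The column condition at `j = 0` follows from the pieces once there are two columns; it is
imposed so that the one-column case is the base of the recursion. -/
def AdmissiblePuzzle (m : ℕ) : Type :=
  {f : Fin 2 × Fin (m + 1) ≃ Fin (2 * (m + 1)) // Admissible f}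

namespace AdmissiblePuzzle

lemma apply_eq_fst (f : AdmissiblePuzzle 0) : ⇑f.1 = Prod.fst := by
  have h00 : f.1 (0, 0) = 0 := f.2.apply_zero_zero
  have h10 : f.1 (1, 0) ≠ 0 := h00 ▸ f.1.injective.ne (by simp)
  funext ⟨i, j⟩
  obtain rfl : j = 0 := Fin.fin_one_eq_zero j
  fin_cases i
  · exact h00
  · exact Fin.eq_one_of_ne_zero _ h10

lemma card_zero : Nat.card (AdmissiblePuzzle 0) = 1 := by
  refine Nat.card_eq_one_iff_unique.mpr ⟨⟨fun f g => ?_⟩, ?_⟩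
  · exact Subtype.ext (DFunLike.coe_injective ((apply_eq_fst f).trans (apply_eq_fst g).symm))
  · exact ⟨⟨Equiv.prodUnique (Fin 2) (Fin 1), fun j => by simp, fun j => j.elim0⟩⟩

noncomputable def cons (m : ℕ) (cg : Fin (2 * (m + 1)) × AdmissiblePuzzle m) :
    AdmissiblePuzzle (m + 1) :=
  ⟨Equiv.ofBijective (consColumn cg.1 cg.2.1)
      ((Fintype.bijective_iff_injective_and_card _).mpr
        ⟨consColumn_injective cg.2.1.injective, by simp⟩),
    cg.2.2.consColumn ((cg.2.2.apply_zero_le (cg.2.1.symm cg.1)).trans_eq (by simp))⟩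

lemma cons_injective (m : ℕ) : Injective (cons m) := by
  rintro ⟨c, g⟩ ⟨c', g'⟩ h
  have hF : consColumn c g.1 = consColumn c' g'.1 :=
    congrArg (fun F : AdmissiblePuzzle (m + 1) => ⇑F.1) h
  obtain rfl : c = c' := by simpa using congrFun hF (1, 0)
  refine Prod.ext rfl (Subtype.ext (Equiv.ext fun p => (strictMono_skipTwo c).injective ?_))
  simpa using congrFun hF (p.1, p.2.succ)

lemma cons_surjective (m : ℕ) : Surjective (cons m) := by
  rintro ⟨F, hF⟩
  have hF0 : F (0, 0) = 0 := hF.apply_zero_zero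
  have hT : 2 ≤ (F (1, 0)).val := by
    have h := hF.2 0
    simp only [Fin.castSucc_zero, Fin.lt_def] at h
    omega
  obtain ⟨c, hc⟩ : ∃ c : Fin (2 * (m + 1)), c.succ.succ = F (1, 0) :=
    ⟨⟨F (1, 0) - 2, by have := (F (1, 0)).isLt; omega⟩, Fin.ext (by simp; omega)⟩
  have hpre : ∀ p : Fin 2 × Fin (m + 1), ∃ y, skipTwo c y = F (p.1, p.2.succ) := fun p =>
    exists_skipTwo_eq c (hF0 ▸ F.injective.ne (by simp)) (hc ▸ F.injective.ne (by simp))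
  choose g hg using hpre
  have hcons : consColumn c g = F := by
    funext ⟨i, j⟩
    cases j using Fin.cases
    · fin_cases i <;> simp [hF0, hc]
    · exact hg _
  have hg_inj : Injective g := fun p q h => by
    have := F.injective ((hg p).symm.trans (h ▸ hg q))
    simpa [Prod.ext_iff] using this
  refine ⟨(c, ⟨Equiv.ofBijective g ((Fintype.bijective_iff_injective_and_card _).mpr
    ⟨hg_inj, by simp⟩), Admissible.of_consColumn (hcons ▸ hF)⟩), ?_⟩
  exact Subtype.ext (Equiv.ext (congrFun hcons))

lemma card_succ (m : ℕ) :
    Nat.card (AdmissiblePuzzle (m + 1)) = 2 * (m + 1) * Nat.card (AdmissiblePuzzle m) := by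
  rw [← Nat.card_congr (Equiv.ofBijective _ ⟨cons_injective m, cons_surjective m⟩),
    Nat.card_prod, Nat.card_fin]

lemma card (m : ℕ) : Nat.card (AdmissiblePuzzle m) = 2 ^ m * m.factorial := by
  induction m with
  | zero => exact card_zero
  | succ m ih =>
    rw [card_succ, ih, pow_succ, Nat.factorial_succ]
    ring

end AdmissiblePuzzle

lemma puzzleCount_supportAB_eq_card {m : ℕ} (hm : 1 ≤ m) :
    puzzleCount (m + 1) supportAB = Nat.card (AdmissiblePuzzle m) :=
  Nat.card_congr (Equiv.subtypeEquivRight fun f => forall_piece_mem_iff_admissible hm f.injective)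

end TwoRowPuzzle

theorem stmt5 (n : ℕ) (hn : 2 ≤ n) :
    puzzleCount n {(1, 2, 3, 4), (1, 2, 4, 3)} = 2 ^ (n - 1) * Nat.factorial (n - 1) := by
  obtain ⟨m, rfl⟩ : ∃ m, n = m + 1 := ⟨n - 1, by omega⟩
  rw [Nat.add_sub_cancel, TwoRowPuzzle.puzzleCount_supportAB_eq_card (by omega),
    TwoRowPuzzle.AdmissiblePuzzle.card]
end

section
/- For every n ≥ 2, the number of standard puzzles of shape 2×n with support {A, E} = {(1,2,3,4), (1,4,2,3)} equals n. -/
/-!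
Each of the patterns A and E says that along the piece the bottom row increases, the top row
decreases and the bottom-left entry lies below the top-right one; they differ only in where the
bottom-right entry sits. Hence the bottom row increases, the top row decreases, and each of the
first `n - 1` bottom entries lies below the whole top row, so these entries are `0, …, n - 2`
(values counted from `0`).
The top row then lists the remaining values in decreasing order, so the puzzle is determined by
its last bottom entry `v`, and `v` can be any of `n - 1, …, 2n - 1` except `n`: for `v = n` the
last top entry is `n - 1 < v` while the one before it exceeds `v`, so the last piece is neither
A nor E.
-/

abbrev supportAE : Set (ℕ × ℕ × ℕ × ℕ) := {(1, 2, 3, 4), (1, 4, 2, 3)}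

lemma puzzleRank_mem_supportAE_iff {N : ℕ} (w x y z : Fin N) :
    (puzzleRank ![w, x, y, z] 0, puzzleRank ![w, x, y, z] 1, puzzleRank ![w, x, y, z] 2,
      puzzleRank ![w, x, y, z] 3) ∈ supportAE ↔
    (w < x ∧ x < y ∧ y < z) ∨ (w < y ∧ y < z ∧ z < x) := by
  simp only [puzzleRank, Finset.card_filter, Fin.sum_univ_four]
  simp only [Matrix.cons_val_zero, Matrix.cons_val_one, Matrix.cons_val_two,
    Matrix.cons_val_three, Matrix.head_cons, Matrix.tail_cons, Set.mem_insert_iff,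
    Set.mem_singleton_iff, Prod.mk.injEq]
  grind

section Rows

variable {β γ : Type*}

def bottomRow (f : Fin 2 × β → γ) (i : β) : γ := f (0, i)

def topRow (f : Fin 2 × β → γ) (i : β) : γ := f (1, i)

lemma range_topRow_eq_compl (e : Fin 2 × β ≃ γ) :
    Set.range (topRow e) = (Set.range (bottomRow e))ᶜ := by
  ext y
  obtain ⟨⟨r, i⟩, rfl⟩ := e.surjective y
  fin_cases r <;> simp [topRow, bottomRow]

end Rows

lemma Fin.val_eq_of_strictMono_of_Iio_subset_range {k N : ℕ} {a : Fin k → Fin N}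
    (ha : StrictMono a) (i : Fin k) (h : ∀ y < a i, y ∈ Set.range a) : (a i : ℕ) = i := by
  have hIio : Finset.Iio (a i) = (Finset.Iio i).image a := by
    ext y
    simp only [Finset.mem_Iio, Finset.mem_image]
    constructor
    · intro hy
      obtain ⟨l, rfl⟩ := h y hy
      exact ⟨l, ha.lt_iff_lt.mp hy, rfl⟩
    · rintro ⟨l, hl, rfl⟩
      exact ha hl
  rw [← Fin.card_Iio, hIio, Finset.card_image_of_injective _ ha.injective, Fin.card_Iio]

lemma piece_mem_supportAE_iff {m : ℕ} (f : Fin 2 × Fin (m + 1) → Fin (2 * (m + 1)))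
    (j : Fin m) :
    piece f j (Nat.succ_lt_succ j.isLt) ∈ supportAE ↔
      (bottomRow f j.castSucc < bottomRow f j.succ ∧ bottomRow f j.succ < topRow f j.succ ∧
        topRow f j.succ < topRow f j.castSucc) ∨
      (bottomRow f j.castSucc < topRow f j.succ ∧ topRow f j.succ < topRow f j.castSucc ∧
        topRow f j.castSucc < bottomRow f j.succ) :=
  puzzleRank_mem_supportAE_iff _ _ _ _

def lastBottomValues (m : ℕ) : Finset (Fin (2 * (m + 1))) :=
  (Finset.Ici ⟨m, by omega⟩).erase ⟨m + 1, by omega⟩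

lemma mem_lastBottomValues {m : ℕ} {v : Fin (2 * (m + 1))} :
    v ∈ lastBottomValues m ↔ m ≤ v.val ∧ v.val ≠ m + 1 := by
  simp [lastBottomValues, Fin.le_def, Fin.ext_iff, and_comm]

lemma card_lastBottomValues (m : ℕ) : (lastBottomValues m).card = m + 1 := by
  rw [lastBottomValues, Finset.card_erase_of_mem (by simp [Fin.le_def]), Fin.card_Ici]
  show 2 * (m + 1) - m - 1 = m + 1
  omega

section AEPuzzle

variable {m : ℕ} {f : Fin 2 × Fin (m + 1) ≃ Fin (2 * (m + 1))}
  (hf : ∀ j (hj : j + 1 < m + 1), piece f j hj ∈ supportAE)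
include hf

lemma piece_A_or_E (j : Fin m) :
    (bottomRow f j.castSucc < bottomRow f j.succ ∧ bottomRow f j.succ < topRow f j.succ ∧
        topRow f j.succ < topRow f j.castSucc) ∨
      (bottomRow f j.castSucc < topRow f j.succ ∧ topRow f j.succ < topRow f j.castSucc ∧
        topRow f j.castSucc < bottomRow f j.succ) :=
  (piece_mem_supportAE_iff f j).mp (hf j _)

lemma bottomRow_strictMono : StrictMono (bottomRow f) :=
  Fin.strictMono_iff_lt_succ.mpr fun j => by
    rcases piece_A_or_E hf j with h | h
    · exact h.1
    · exact h.1.trans (h.2.1.trans h.2.2)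

lemma topRow_strictAnti : StrictAnti (topRow f) :=
  Fin.strictAnti_iff_succ_lt.mpr fun j => by
    rcases piece_A_or_E hf j with ⟨-, -, h⟩ | ⟨-, h, -⟩ <;> exact h

lemma bottomRow_castSucc_lt_topRow_succ (j : Fin m) :
    bottomRow f j.castSucc < topRow f j.succ := by
  rcases piece_A_or_E hf j with h | h
  · exact h.1.trans h.2.1
  · exact h.1

lemma bottomRow_castSucc_lt_topRow (j : Fin m) (i : Fin (m + 1)) :
    bottomRow f j.castSucc < topRow f i := by
  rcases le_or_gt i j.succ with hi | hi
  · exact (bottomRow_castSucc_lt_topRow_succ hf j).trans_le ((topRow_strictAnti hf).antitone hi)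
  · obtain ⟨k, rfl⟩ := Fin.exists_succ_eq.mpr (Fin.ne_zero_of_lt hi)
    have hjk : j.castSucc < k.castSucc :=
      Fin.castSucc_lt_castSucc_iff.mpr (Fin.succ_lt_succ_iff.mp hi)
    exact ((bottomRow_strictMono hf) hjk).trans (bottomRow_castSucc_lt_topRow_succ hf k)

lemma val_bottomRow_of_forall_lt_topRow (i : Fin (m + 1))
    (hi : ∀ k, bottomRow f i < topRow f k) : (bottomRow f i).val = i := by
  refine Fin.val_eq_of_strictMono_of_Iio_subset_range (bottomRow_strictMono hf) i fun y hy => ?_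
  obtain ⟨⟨r, k⟩, rfl⟩ := f.surjective y
  fin_cases r
  · exact ⟨k, rfl⟩
  · exact absurd hy (hi k).not_gt

lemma val_bottomRow_castSucc (j : Fin m) : (bottomRow f j.castSucc).val = j :=
  val_bottomRow_of_forall_lt_topRow hf _ (bottomRow_castSucc_lt_topRow hf j)

lemma bottomRow_last_mem_lastBottomValues (hm : 1 ≤ m) :
    bottomRow f (Fin.last m) ∈ lastBottomValues m := by
  set j : Fin m := ⟨m - 1, by omega⟩
  have hj : j.succ = Fin.last m := Fin.ext (by simp [j]; omega)
  have hprev : (bottomRow f j.castSucc).val = m - 1 := val_bottomRow_castSucc hf j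
  rw [mem_lastBottomValues]
  rcases piece_A_or_E hf j with ⟨-, hA, -⟩ | ⟨hE₁, hE₂, hE₃⟩
  · rw [hj] at hA
    have : (bottomRow f (Fin.last m)).val = m := val_bottomRow_of_forall_lt_topRow hf _ fun k =>
      hA.trans_le ((topRow_strictAnti hf).antitone (Fin.le_last k))
    omega
  · simp only [hj, Fin.lt_def] at hE₁ hE₂ hE₃
    omega

end AEPuzzle

lemma eq_of_bottomRow_last_eq {m : ℕ} {f f' : Fin 2 × Fin (m + 1) ≃ Fin (2 * (m + 1))}
    (hf : ∀ j (hj : j + 1 < m + 1), piece f j hj ∈ supportAE)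
    (hf' : ∀ j (hj : j + 1 < m + 1), piece f' j hj ∈ supportAE)
    (h : bottomRow f (Fin.last m) = bottomRow f' (Fin.last m)) : f = f' := by
  have hbottom : bottomRow f = bottomRow f' := funext fun i => by
    rcases Fin.eq_castSucc_or_eq_last i with ⟨j, rfl⟩ | rfl
    · exact Fin.ext ((val_bottomRow_castSucc hf j).trans (val_bottomRow_castSucc hf' j).symm)
    · exact h
  have htop : topRow f = topRow f' :=
    ((topRow_strictAnti hf).range_inj (topRow_strictAnti hf')).mp
      (by rw [range_topRow_eq_compl, range_topRow_eq_compl, hbottom])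
  ext ⟨r, i⟩
  fin_cases r
  · exact congrArg Fin.val (congrFun hbottom i)
  · exact congrArg Fin.val (congrFun htop i)

/-- The bottom row is `0, 1, …, m - 1, v`; the top row lists the remaining values
`{m, …, 2m + 1} \ {v}` in decreasing order. -/
def aePuzzleEntry (m v : ℕ) (p : Fin 2 × Fin (m + 1)) : ℕ :=
  if p.1 = 0 then (if p.2.val < m then p.2.val else v)
  else if v < 2 * m + 1 - p.2.val then 2 * m + 1 - p.2.val else 2 * m - p.2.val

noncomputable def aePuzzle (m : ℕ) (v : Fin (2 * (m + 1))) (hv : m ≤ v.val) :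
    Fin 2 × Fin (m + 1) ≃ Fin (2 * (m + 1)) :=
  Equiv.ofBijective
    (fun p => ⟨aePuzzleEntry m v p, by unfold aePuzzleEntry; split_ifs <;> omega⟩) <| by
    refine (Fintype.bijective_iff_injective_and_card _).mpr ⟨?_, by simp [mul_comm]⟩
    rintro ⟨r, i⟩ ⟨r', i'⟩ h
    have hi := i.isLt
    have hi' := i'.isLt
    fin_cases r <;> fin_cases r' <;>
      simp only [aePuzzleEntry, Fin.zero_eta, Fin.mk_one, Fin.isValue, zero_ne_one, one_ne_zero,
        ↓reduceIte, Fin.ext_iff, Prod.mk.injEq, true_and, false_and] at h ⊢ <;>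
      split_ifs at h <;> omega

lemma bottomRow_aePuzzle_last (m : ℕ) (v : Fin (2 * (m + 1))) (hv : m ≤ v.val) :
    bottomRow (aePuzzle m v hv) (Fin.last m) = v :=
  Fin.ext (by simp [bottomRow, aePuzzle, aePuzzleEntry])

lemma piece_aePuzzle_mem {m : ℕ} {v : Fin (2 * (m + 1))} (hv : m ≤ v.val)
    (hv' : v.val ≠ m + 1) (j : ℕ) (hj : j + 1 < m + 1) : piece (aePuzzle m v hv) j hj ∈ supportAE := by
  refine (piece_mem_supportAE_iff _ ⟨j, by omega⟩).mpr ?_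
  simp only [bottomRow, topRow, aePuzzle, Equiv.ofBijective_apply, aePuzzleEntry, Fin.lt_def,
    ↓reduceIte, Fin.castSucc_mk, Fin.succ_mk, Fin.isValue, one_ne_zero, Nat.reduceSubDiff]
  split_ifs <;> omega

noncomputable def aePuzzleEquivLastBottomValues {m : ℕ} (hm : 1 ≤ m) :
    {f : Fin 2 × Fin (m + 1) ≃ Fin (2 * (m + 1)) // ∀ j (hj : j + 1 < m + 1),
      piece f j hj ∈ supportAE} ≃ lastBottomValues m :=
  Equiv.ofBijective
    (fun f => ⟨bottomRow f.1 (Fin.last m), bottomRow_last_mem_lastBottomValues f.2 hm⟩)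
    ⟨fun f f' h => Subtype.ext (eq_of_bottomRow_last_eq f.2 f'.2 (congrArg Subtype.val h)),
      fun ⟨v, hv⟩ => ⟨⟨aePuzzle m v (mem_lastBottomValues.mp hv).1,
        piece_aePuzzle_mem _ (mem_lastBottomValues.mp hv).2⟩,
        Subtype.ext (bottomRow_aePuzzle_last m v (mem_lastBottomValues.mp hv).1)⟩⟩

theorem stmt6 (n : ℕ) (hn : 2 ≤ n) :
    puzzleCount n {(1, 2, 3, 4), (1, 4, 2, 3)} = n := by
  obtain ⟨m, rfl⟩ : ∃ m, n = m + 1 := ⟨n - 1, by omega⟩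
  rw [puzzleCount, Nat.card_congr (aePuzzleEquivLastBottomValues (by omega)),
    Nat.card_eq_fintype_card, Fintype.card_coe, card_lastBottomValues]
end

section
/- For every n ≥ 2, the number of standard puzzles of shape 2×n with support {A, C, X, Z} = {(1,2,3,4), (1,3,2,4), (4,2,3,1), (4,3,2,1)} equals 2^n. -/
open Equiv Function
open scoped Nat

def Equiv.fiberwiseEquivEquivPi {α β γ : Type*} (f : α → γ) (g : β → γ) :
    {e : α ≃ β // ∀ a, g (e a) = f a} ≃ ∀ c, ({a // f a = c} ≃ {b // g b = c}) where
  toFun e c := e.1.subtypeEquiv fun a => by rw [e.2 a]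
  invFun E := ⟨ofFiberEquiv E, ofFiberEquiv_map E⟩
  left_inv e := by ext a; rfl
  right_inv E := by funext c; ext ⟨a, rfl⟩; rfl

theorem Nat.card_equiv_of_card_eq {α β : Type*} [Finite α] [Finite β]
    (h : Nat.card α = Nat.card β) : Nat.card (α ≃ β) = (Nat.card α)! := by
  obtain ⟨e⟩ := Finite.card_eq.1 h
  exact (Nat.card_congr ((Equiv.refl α).equivCongr e.symm)).trans Nat.card_perm

theorem Nat.card_fiberwiseEquiv {α β γ : Type*} [Finite α] [Finite β] [Fintype γ]
    (f : α → γ) (g : β → γ) (h : ∀ c, Nat.card {a // f a = c} = Nat.card {b // g b = c}) :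
    Nat.card {e : α ≃ β // ∀ a, g (e a) = f a} = ∏ c, (Nat.card {a // f a = c})! := by
  rw [Nat.card_congr (Equiv.fiberwiseEquivEquivPi f g), Nat.card_pi]
  exact Finset.prod_congr rfl fun c _ => Nat.card_equiv_of_card_eq (h c)

theorem exists_perm_strictMono_comp {m : ℕ} {α : Type*} [LinearOrder α] {q : Fin m → α}
    (hq : Injective q) : ∃ σ : Perm (Fin m), StrictMono (q ∘ σ) :=
  ⟨Tuple.sort q,
    (Tuple.monotone_sort q).strictMono_of_injective (hq.comp (Tuple.sort q).injective)⟩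

theorem Nat.apply_eq_self_of_lt_succ {m : ℕ} {W : ℕ → ℕ}
    (hW : ∀ k, k + 1 < m → W k < W (k + 1)) (hlast : W (m - 1) < m) {k : ℕ} (hk : k < m) :
    W k = k := by
  let V : ℕ → ℕ := fun l => if l < m then W l else l
  have hV : StrictMono V := strictMono_nat_of_lt_succ fun l => by
    rcases lt_trichotomy (l + 1) m with h | h | h
    · simp [V, h, hW l h, show l < m by omega]
    · obtain rfl : l = m - 1 := by omega
      simp [V, show m - 1 < m by omega, show m - 1 + 1 = m by omega, hlast]
    · simp [V, show ¬ l < m by omega, show ¬ l + 1 < m by omega]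
  have hle := hV.add_le_nat (m - k) k
  have hge := hV.le_apply (x := k)
  simp only [Nat.sub_add_cancel hk.le, V, hk, if_true, lt_irrefl, if_false] at hle hge
  omega

theorem puzzleRank_eq_of_strictMono {N : ℕ} {q : Fin 4 → Fin N} (σ : Perm (Fin 4))
    (hσ : StrictMono (q ∘ σ)) (i : Fin 4) : puzzleRank q i = σ.symm i + 1 := by
  have hfilter : Finset.univ.filter (fun k => q k ≤ q i) =
      (Finset.Iic (σ.symm i)).map σ.toEmbedding := by
    ext k
    have hle := hσ.le_iff_le (a := σ.symm k) (b := σ.symm i)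
    simp only [comp_apply, apply_symm_apply] at hle
    simp [hle]
  rw [puzzleRank, hfilter, Finset.card_map, Fin.card_Iic]

def supportACXZ : Set (ℕ × ℕ × ℕ × ℕ) :=
  {(1, 2, 3, 4), (1, 3, 2, 4), (4, 2, 3, 1), (4, 3, 2, 1)}

theorem mem_supportACXZ_iff_of_perm (τ : Perm (Fin 4)) :
    ((τ 0 : ℕ) + 1, (τ 1 : ℕ) + 1, (τ 2 : ℕ) + 1, (τ 3 : ℕ) + 1) ∈ supportACXZ ↔
      min (τ 0) (τ 3) < min (τ 1) (τ 2) ∧ max (τ 1) (τ 2) < max (τ 0) (τ 3) := by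
  simp only [supportACXZ, Set.mem_insert_iff, Set.mem_singleton_iff, Prod.mk.injEq]
  revert τ
  decide

theorem ranks_mem_supportACXZ_iff {N : ℕ} {q : Fin 4 → Fin N} (hq : Injective q) :
    (puzzleRank q 0, puzzleRank q 1, puzzleRank q 2, puzzleRank q 3) ∈ supportACXZ ↔
      min (q 0) (q 3) < min (q 1) (q 2) ∧ max (q 1) (q 2) < max (q 0) (q 3) := by
  obtain ⟨σ, hσ⟩ := exists_perm_strictMono_comp hq
  have hq' : ∀ i, q i = (q ∘ σ) (σ.symm i) := by simp
  simp only [puzzleRank_eq_of_strictMono σ hσ, mem_supportACXZ_iff_of_perm, hq' 0, hq' 1, hq' 2,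
    hq' 3, ← hσ.monotone.map_min, ← hσ.monotone.map_max, hσ.lt_iff_lt]

section Columns

variable {n : ℕ}

def colMin (f : Fin 2 × Fin n → Fin (2 * n)) (j : Fin n) : Fin (2 * n) :=
  min (f (0, j)) (f (1, j))

def colMax (f : Fin 2 × Fin n → Fin (2 * n)) (j : Fin n) : Fin (2 * n) :=
  max (f (0, j)) (f (1, j))

theorem piece_mem_supportACXZ_iff (f : (Fin 2 × Fin n) ≃ Fin (2 * n)) (j : ℕ) (hj : j + 1 < n) :
    piece f j hj ∈ supportACXZ ↔
      colMin f ⟨j, by omega⟩ < colMin f ⟨j + 1, hj⟩ ∧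
        colMax f ⟨j + 1, hj⟩ < colMax f ⟨j, by omega⟩ := by
  have hcells : Injective ![((0 : Fin 2), (⟨j, by omega⟩ : Fin n)), (0, ⟨j + 1, hj⟩),
      (1, ⟨j + 1, hj⟩), (1, ⟨j, by omega⟩)] := by
    intro a b hab
    fin_cases a <;> fin_cases b <;> simp_all [Prod.ext_iff]
  have := ranks_mem_supportACXZ_iff (f.injective.comp hcells)
  simp only [comp_apply] at this
  exact this

theorem val_eq_of_nested {lo hi : Fin n → Fin (2 * n)}
    (hlo : ∀ i j : Fin n, (i : ℕ) + 1 = j → lo i < lo j)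
    (hhi : ∀ i j : Fin n, (i : ℕ) + 1 = j → hi j < hi i)
    (hlt : ∀ i, lo i < hi i) (i : Fin n) :
    (lo i : ℕ) = i ∧ (hi i : ℕ) = 2 * n - 1 - i := by
  -- the staircase `lo 0 < ⋯ < lo (n - 1) < hi (n - 1) < ⋯ < hi 0` runs through all of `Fin (2n)`
  let W : ℕ → ℕ := fun k =>
    if h : k < n then lo ⟨k, h⟩ else if h' : k < 2 * n then hi ⟨2 * n - 1 - k, by omega⟩ else 0
  have hW : ∀ k, k + 1 < 2 * n → W k < W (k + 1) := by
    intro k hk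
    rcases lt_trichotomy (k + 1) n with h | h | h
    · simp only [W, dif_pos h, dif_pos (show k < n by omega)]
      exact hlo _ _ rfl
    · simp only [W, dif_pos (show k < n by omega), dif_neg (show ¬ k + 1 < n by omega), dif_pos hk,
        show 2 * n - 1 - (k + 1) = k by omega]
      exact hlt _
    · simp only [W, dif_neg (show ¬ k < n by omega), dif_neg (show ¬ k + 1 < n by omega),
        dif_pos hk, dif_pos (show k < 2 * n by omega)]
      exact hhi _ _ (show 2 * n - 1 - (k + 1) + 1 = 2 * n - 1 - k by omega)
  have hlast : W (2 * n - 1) < 2 * n := by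
    have := i.pos
    simp only [W]
    split_ifs <;> first | exact Fin.isLt _ | omega
  constructor
  · have := Nat.apply_eq_self_of_lt_succ hW hlast (show (i : ℕ) < 2 * n by omega)
    simpa [W, i.2] using this
  · have := Nat.apply_eq_self_of_lt_succ hW hlast (show 2 * n - 1 - i < 2 * n by omega)
    simpa [W, show ¬ 2 * n - 1 - (i : ℕ) < n by omega, show 2 * n - 1 - (i : ℕ) < 2 * n by omega,
      show 2 * n - 1 - (2 * n - 1 - (i : ℕ)) = i by omega] using this

/-- The column that the value `v` occupies in a valid puzzle. -/
def foldCol (v : Fin (2 * n)) : Fin n :=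
  if h : (v : ℕ) < n then ⟨v, h⟩ else ⟨2 * n - 1 - v, by omega⟩

theorem foldCol_eq_iff {v : Fin (2 * n)} {j : Fin n} :
    foldCol v = j ↔ (v : ℕ) = j ∨ (v : ℕ) = 2 * n - 1 - j := by
  unfold foldCol
  split_ifs <;> simp only [Fin.ext_iff] <;> omega

theorem foldCol_eq_and_foldCol_eq_iff {a b : Fin (2 * n)} (hab : a ≠ b) (j : Fin n) :
    foldCol a = j ∧ foldCol b = j ↔
      ((min a b : Fin (2 * n)) : ℕ) = j ∧ ((max a b : Fin (2 * n)) : ℕ) = 2 * n - 1 - j := by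
  have := Fin.val_injective.ne hab
  rw [foldCol_eq_iff, foldCol_eq_iff, Fin.coe_min, Fin.coe_max]
  omega

theorem forall_piece_mem_supportACXZ_iff (f : (Fin 2 × Fin n) ≃ Fin (2 * n)) :
    (∀ j (hj : j + 1 < n), piece f j hj ∈ supportACXZ) ↔ ∀ p, foldCol (f p) = p.2 := by
  have hcol : ∀ j : Fin n, f (0, j) ≠ f (1, j) := fun j => f.injective.ne (by simp)
  simp only [Prod.forall, Fin.forall_fin_two, ← forall_and,
    foldCol_eq_and_foldCol_eq_iff (hcol _)]
  constructor
  · intro hf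
    refine val_eq_of_nested (lo := colMin f) (hi := colMax f) ?_ ?_ fun j => min_lt_max.2 (hcol j)
    · rintro i ⟨_, hj⟩ rfl
      exact ((piece_mem_supportACXZ_iff f i hj).1 (hf i hj)).1
    · rintro i ⟨_, hj⟩ rfl
      exact ((piece_mem_supportACXZ_iff f i hj).1 (hf i hj)).2
  · intro hf j hj
    have h₀ := hf ⟨j, by omega⟩
    have h₁ := hf ⟨j + 1, hj⟩
    rw [piece_mem_supportACXZ_iff, Fin.lt_def, Fin.lt_def]
    simp only [colMin, colMax, Fin.coe_min, Fin.coe_max] at h₀ h₁ ⊢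
    omega

theorem card_fiber_snd (j : Fin n) : Nat.card {p : Fin 2 × Fin n // p.2 = j} = 2 := by
  rw [Nat.card_eq_fintype_card, Fintype.card_subtype, Finset.card_eq_two]
  refine ⟨(0, j), (1, j), by simp, ?_⟩
  ext ⟨r, k⟩
  fin_cases r <;> simp [eq_comm]

theorem card_fiber_foldCol (j : Fin n) : Nat.card {v : Fin (2 * n) // foldCol v = j} = 2 := by
  rw [Nat.card_eq_fintype_card, Fintype.card_subtype, Finset.card_eq_two]
  refine ⟨⟨j, by omega⟩, ⟨2 * n - 1 - j, by omega⟩, by simp [Fin.ext_iff]; omega, ?_⟩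
  ext v
  rw [Finset.mem_filter, foldCol_eq_iff]
  simp [Fin.ext_iff]

end Columns

theorem stmt15_general (n : ℕ) :
    puzzleCount n {(1, 2, 3, 4), (1, 3, 2, 4), (4, 2, 3, 1), (4, 3, 2, 1)} = 2 ^ n := by
  calc puzzleCount n supportACXZ
      = Nat.card {f : (Fin 2 × Fin n) ≃ Fin (2 * n) // ∀ p, foldCol (f p) = p.2} :=
        Nat.card_congr (Equiv.subtypeEquivRight forall_piece_mem_supportACXZ_iff)
    _ = ∏ j : Fin n, (Nat.card {p : Fin 2 × Fin n // p.2 = j})! :=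
        Nat.card_fiberwiseEquiv _ _ fun j => (card_fiber_snd j).trans (card_fiber_foldCol j).symm
    _ = 2 ^ n := by
      simp only [card_fiber_snd, Nat.factorial_two, Finset.prod_const, Finset.card_univ,
        Fintype.card_fin]

theorem stmt15 (n : ℕ) (hn : 2 ≤ n) :
    puzzleCount n {(1, 2, 3, 4), (1, 3, 2, 4), (4, 2, 3, 1), (4, 3, 2, 1)} = 2 ^ n :=
  stmt15_general n
end
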